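/- Let F be a field, and let r' ∈ F^{n×m}, L' ∈ F^{n×μ'}, E' ∈ F^{δ'×m}, U ⊆ {0,…,n−1} with |U| = μ' satisfy I_U^T r' = 0 and I_U^T L' = −I_{μ'}. Then the rank of the (n+δ')×(n+m) block matrix [[I_n + L' I_U^T , r'],[0 , E']] equals (n − μ') + rank E'. In particular, if rank E' = δ', this rank equals n − μ' + δ'. -/

import Mathlib

/-!
With `S = I_U`, the hypothesis `Sᵀ L' = -1` makes `Q = -L' Sᵀ` an idempotent of rank `μ'`, so
`P = 1 + L' Sᵀ = 1 - Q` is an idempotent of rank `n - μ'`. Since `Sᵀ r' = 0`, also `P r' = r'`,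
so a unimodular column operation clears the block `r'` and leaves the block-diagonal matrix
`diag(P, E')`, whose rank is `rank P + rank E'`.
-/

open Matrix

/-- `matSel F U h` is the matrix `I_U`: the `n × |U|` matrix formed by the columns of the
`n × n` identity matrix indexed by `U`, in increasing order. -/
def matSel (F : Type*) [Zero F] [One F] {n μ : ℕ} (U : Finset (Fin n)) (h : U.card = μ) :
    Matrix (Fin n) (Fin μ) F :=
  Matrix.of fun i j => if i = U.orderEmbOfFin h j then 1 else 0

theorem Submodule.finrank_prod {K M N : Type*} [DivisionRing K] [AddCommGroup M] [AddCommGroup N]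
    [Module K M] [Module K N] [FiniteDimensional K M] [FiniteDimensional K N]
    (p : Submodule K M) (q : Submodule K N) :
    Module.finrank K (p.prod q) = Module.finrank K p + Module.finrank K q := by
  have hinj : Function.Injective (p.subtype.prodMap q.subtype) :=
    Prod.map_injective.mpr ⟨p.injective_subtype, q.injective_subtype⟩
  rw [← Module.finrank_prod, ← LinearMap.finrank_range_of_inj hinj, LinearMap.range_prodMap,
    Submodule.range_subtype, Submodule.range_subtype]

namespace Matrix

theorem rank_add_le {K m n : Type*} [Field K] [Fintype n] (A B : Matrix m n K) :
    (A + B).rank ≤ A.rank + B.rank := by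
  unfold rank
  rw [mulVecLin_add]
  exact (Submodule.finrank_mono (LinearMap.range_add_le _ _)).trans
    (Submodule.finrank_add_le_finrank_add_finrank _ _)

variable {K : Type*} [Field K] {l m n o : Type*} [Fintype l] [Fintype m] [Fintype n] [Fintype o]

theorem rank_fromBlocks_zero_zero (A : Matrix m n K) (D : Matrix l o K) :
    (fromBlocks A 0 0 D).rank = A.rank + D.rank := by
  let eDom := LinearEquiv.sumArrowLequivProdArrow n o K K
  let eCod := LinearEquiv.sumArrowLequivProdArrow m l K K
  have hconj : (fromBlocks A 0 0 D).mulVecLin =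
      eCod.symm.toLinearMap ∘ₗ A.mulVecLin.prodMap D.mulVecLin ∘ₗ eDom.toLinearMap := by
    refine LinearMap.ext fun v => funext fun i => ?_
    rcases i with i | i <;>
      simp only [LinearMap.comp_apply, mulVecLin_apply, fromBlocks_mulVec, zero_mulVec, add_zero,
        zero_add] <;>
      rfl
  rw [rank, hconj, LinearMap.range_comp, LinearMap.range_comp_of_range_eq_top _ eDom.range,
    LinearEquiv.finrank_map_eq, LinearMap.range_prodMap, Submodule.finrank_prod]
  rfl

theorem rank_fromBlocks_zero₂₁_of_eq_mul [DecidableEq n] [DecidableEq o] {A : Matrix m n K}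
    {B : Matrix m o K} (X : Matrix n o K) (hB : B = A * X) (D : Matrix l o K) :
    (fromBlocks A B 0 D).rank = A.rank + D.rank := by
  have hdet : IsUnit (fromBlocks 1 (-X) 0 1 : Matrix (n ⊕ o) (n ⊕ o) K).det := by simp
  rw [← rank_mul_eq_left_of_isUnit_det _ _ hdet, fromBlocks_multiply, hB]
  simp [rank_fromBlocks_zero_zero]

theorem rank_add_rank_one_sub_of_isIdempotentElem [DecidableEq n] {P : Matrix n n K}
    (hP : IsIdempotentElem P) : P.rank + (1 - P).rank = Fintype.card n := by
  refine le_antisymm (rank_add_rank_le_card_of_mul_eq_zero ?_) ?_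
  · rw [mul_sub, mul_one, hP.eq, sub_self]
  · calc Fintype.card n = (P + (1 - P)).rank := by rw [add_sub_cancel, rank_one]
      _ ≤ P.rank + (1 - P).rank := rank_add_le _ _

theorem rank_mul_of_mul_eq_one [DecidableEq n] {A : Matrix m n K} {B : Matrix n m K}
    (h : B * A = 1) : (A * B).rank = Fintype.card n := by
  refine le_antisymm ((rank_mul_le_left _ _).trans (rank_le_card_width _)) ?_
  calc Fintype.card n = (B * (A * B) * A).rank := by
        rw [← Matrix.mul_assoc, h, Matrix.one_mul, h, rank_one]
    _ ≤ (A * B).rank := (rank_mul_le_left _ _).trans (rank_mul_le_right _ _)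

theorem rank_one_sub_mul_of_mul_eq_one [DecidableEq m] [DecidableEq n] {A : Matrix m n K}
    {B : Matrix n m K} (h : B * A = 1) : (1 - A * B).rank = Fintype.card m - Fintype.card n := by
  have hidem : IsIdempotentElem (A * B) := by
    rw [IsIdempotentElem, Matrix.mul_assoc, ← Matrix.mul_assoc B, h, Matrix.one_mul]
  have := rank_add_rank_one_sub_of_isIdempotentElem hidem
  rw [rank_mul_of_mul_eq_one h] at this
  omega

end Matrix

theorem stmt4 {F : Type*} [Field F] {n m μ' δ' : ℕ}
    (U : Finset (Fin n)) (hU : U.card = μ')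
    (r' : Matrix (Fin n) (Fin m) F) (L' : Matrix (Fin n) (Fin μ') F)
    (E' : Matrix (Fin δ') (Fin m) F)
    (h1 : (matSel F U hU)ᵀ * r' = 0)
    (h2 : (matSel F U hU)ᵀ * L' = -1) :
    (Matrix.fromBlocks (1 + L' * (matSel F U hU)ᵀ) r' 0 E').rank
        = (n - μ') + E'.rank ∧
      (E'.rank = δ' →
        (Matrix.fromBlocks (1 + L' * (matSel F U hU)ᵀ) r' 0 E').rank = n - μ' + δ') := by
  set S := matSel F U hU
  have hSL : -Sᵀ * L' = 1 := by rw [Matrix.neg_mul, h2, neg_neg]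
  have hPr : r' = (1 + L' * Sᵀ) * r' := by
    rw [Matrix.add_mul, Matrix.one_mul, Matrix.mul_assoc, h1, Matrix.mul_zero, add_zero]
  have hrankP : (1 + L' * Sᵀ).rank = n - μ' := by
    rw [← sub_neg_eq_add, ← Matrix.mul_neg, rank_one_sub_mul_of_mul_eq_one hSL,
      Fintype.card_fin, Fintype.card_fin]
  have hrank : (fromBlocks (1 + L' * Sᵀ) r' 0 E').rank = n - μ' + E'.rank := by
    rw [rank_fromBlocks_zero₂₁_of_eq_mul r' hPr, hrankP]
  exact ⟨hrank, fun hE => by rw [hrank, hE]⟩
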